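/- For the sigmoid ψ(u) = 1/(1+e^{-ρ(u-u₀)}) with ρ > 0 and any u^L < u₀, there exists a unique w > u₀ such that the line from (u^L, ψ(u^L)) through (w, ψ(w)) is tangent to ψ at w, i.e., ψ'(w)·(w - u^L) = ψ(w) - ψ(u^L). -/

import Mathlib

/-!
Write `ψ u = sigmoid (ρ (u - u₀))`. Since `ψ' = ρ ψ (1 - ψ)` and `ψ` crosses `1/2` at `u₀`, the
derivative `ψ'` increases strictly on `(-∞, u₀]` and decreases strictly on `[u₀, ∞)`.
For the tangent defect `g w = ψ' w (w - uᴸ) - (ψ w - ψ uᴸ)` the mean value theorem then gives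
`g u₀ > 0` and shows that `g` is strictly decreasing on `[u₀, ∞)`. As `w ψ' w → 0` and `ψ w → 1`,
`g` tends to `ψ uᴸ - 1 < 0`, so `g` has exactly one zero in `(u₀, ∞)`.
-/

open Real Set Filter Topology

/-- Vanishes exactly when the tangent to `f` at `w` passes through `(b, f b)`. -/
noncomputable def tangentDefect (f f' : ℝ → ℝ) (b w : ℝ) : ℝ :=
  f' w * (w - b) - (f w - f b)

section TangentDefect

variable {f f' : ℝ → ℝ} {a b : ℝ}

theorem sub_lt_mul_sub_of_strictMonoOn (hf : ∀ x ∈ Icc a b, HasDerivAt f (f' x) x)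
    (hf' : StrictMonoOn f' (Icc a b)) (hab : a < b) : f b - f a < f' b * (b - a) := by
  obtain ⟨c, hc, hslope⟩ := exists_hasDerivAt_eq_slope f f' hab
    (fun x hx => (hf x hx).continuousAt.continuousWithinAt)
    (fun x hx => hf x (Ioo_subset_Icc_self hx))
  rw [eq_div_iff (sub_pos.2 hab).ne'] at hslope
  rw [← hslope]
  exact mul_lt_mul_of_pos_right
    (hf' (Ioo_subset_Icc_self hc) (right_mem_Icc.2 hab.le) hc.2) (sub_pos.2 hab)

theorem mul_sub_lt_sub_of_strictAntiOn (hf : ∀ x ∈ Icc a b, HasDerivAt f (f' x) x)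
    (hf' : StrictAntiOn f' (Icc a b)) (hab : a < b) : f' b * (b - a) < f b - f a := by
  have := sub_lt_mul_sub_of_strictMonoOn (f := -f) (fun x hx => (hf x hx).neg) hf'.neg hab
  simp only [Pi.neg_apply] at this
  linarith

theorem tangentDefect_pos (hf : ∀ x ∈ Icc b a, HasDerivAt f (f' x) x)
    (hf' : StrictMonoOn f' (Icc b a)) (hba : b < a) : 0 < tangentDefect f f' b a := by
  have := sub_lt_mul_sub_of_strictMonoOn hf hf' hba
  rw [tangentDefect]
  linarith

theorem strictAntiOn_tangentDefect (hf : ∀ x ∈ Ici a, HasDerivAt f (f' x) x)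
    (hf' : StrictAntiOn f' (Ici a)) (hba : b < a) :
    StrictAntiOn (tangentDefect f f' b) (Ici a) := by
  intro v hv w hw hvw
  have hsecant := mul_sub_lt_sub_of_strictAntiOn (fun x hx => hf x (le_trans hv hx.1))
    (hf'.mono fun x hx => le_trans hv hx.1) hvw
  have hslope := hf' hv hw hvw
  have hvb : 0 < v - b := sub_pos.2 (hba.trans_le hv)
  simp only [tangentDefect]
  nlinarith

theorem continuousOn_tangentDefect {s : Set ℝ} (hf : ∀ x ∈ s, HasDerivAt f (f' x) x)
    (hf' : ContinuousOn f' s) : ContinuousOn (tangentDefect f f' b) s := by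
  have hfc : ContinuousOn f s := fun x hx => (hf x hx).continuousAt.continuousWithinAt
  exact (hf'.mul (continuousOn_id.sub continuousOn_const)).sub (hfc.sub continuousOn_const)

end TangentDefect

theorem existsUnique_zero_of_strictAntiOn {g : ℝ → ℝ} {a : ℝ} (hc : ContinuousOn g (Ici a))
    (hg : StrictAntiOn g (Ici a)) (ha : 0 < g a) (hneg : ∀ᶠ w in atTop, g w < 0) :
    ∃! w, w ∈ Ioi a ∧ g w = 0 := by
  obtain ⟨b, hab, hb⟩ := ((eventually_gt_atTop a).and hneg).exists
  obtain ⟨w, hw, hw0⟩ := intermediate_value_Ioo' hab.le (hc.mono Icc_subset_Ici_self) ⟨hb, ha⟩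
  refine ⟨w, ⟨hw.1, hw0⟩, fun v ⟨hv, hv0⟩ => hg.injOn (mem_Ici_of_Ioi hv) (mem_Ici_of_Ioi hw.1) ?_⟩
  rw [hv0, hw0]

namespace Real

theorem strictMonoOn_deriv_sigmoid : StrictMonoOn (deriv sigmoid) (Iic 0) := by
  intro x hx y hy hxy
  have hlt := sigmoid_lt hxy
  have hhalf : sigmoid y ≤ 2⁻¹ := sigmoid_zero ▸ sigmoid_le hy
  simp only [deriv_sigmoid]
  nlinarith

theorem strictAntiOn_deriv_sigmoid : StrictAntiOn (deriv sigmoid) (Ici 0) := by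
  intro x hx y hy hxy
  have hlt := sigmoid_lt hxy
  have hhalf : 2⁻¹ ≤ sigmoid x := sigmoid_zero ▸ sigmoid_le hx
  simp only [deriv_sigmoid]
  nlinarith

theorem deriv_sigmoid_nonneg (x : ℝ) : 0 ≤ deriv sigmoid x := by
  rw [deriv_sigmoid]
  exact mul_nonneg (sigmoid_nonneg x) (sub_nonneg.2 (sigmoid_le_one x))

theorem deriv_sigmoid_le_exp_neg (x : ℝ) : deriv sigmoid x ≤ exp (-x) := by
  simp only [deriv_sigmoid]
  rw [← sigmoid_neg, ← sigmoid_mul_rexp_neg]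
  have := mul_le_one₀ (sigmoid_le_one x) (sigmoid_nonneg x) (sigmoid_le_one x)
  nlinarith [exp_pos (-x)]

theorem tendsto_deriv_sigmoid_atTop : Tendsto (deriv sigmoid) atTop (𝓝 0) :=
  squeeze_zero deriv_sigmoid_nonneg deriv_sigmoid_le_exp_neg
    (tendsto_exp_atBot.comp tendsto_neg_atTop_atBot)

theorem tendsto_add_mul_deriv_sigmoid_atTop (c : ℝ) :
    Tendsto (fun x => (x + c) * deriv sigmoid x) atTop (𝓝 0) := by
  have hx : Tendsto (fun x => x * deriv sigmoid x) atTop (𝓝 0) := by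
    refine squeeze_zero' ?_ ?_ (by simpa using tendsto_pow_mul_exp_neg_atTop_nhds_zero 1)
    · filter_upwards [eventually_ge_atTop 0] with x hx
      exact mul_nonneg hx (deriv_sigmoid_nonneg x)
    · filter_upwards [eventually_ge_atTop 0] with x hx
      exact mul_le_mul_of_nonneg_left (deriv_sigmoid_le_exp_neg x) hx
  simpa [add_mul] using hx.add (tendsto_deriv_sigmoid_atTop.const_mul c)

end Real

section ShiftedSigmoid

variable {ρ : ℝ} (u₀ : ℝ)

theorem hasDerivAt_sigmoid_mul_sub (u : ℝ) :
    HasDerivAt (fun u => sigmoid (ρ * (u - u₀))) (ρ * deriv sigmoid (ρ * (u - u₀))) u := by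
  have := (hasDerivAt_deriv_iff.2 differentiableAt_sigmoid).comp u
    (((hasDerivAt_id u).sub_const u₀).const_mul ρ)
  exact this.congr_deriv (by rw [id, mul_one, mul_comm])

theorem continuous_deriv_sigmoid_mul_sub :
    Continuous (fun u => ρ * deriv sigmoid (ρ * (u - u₀))) := by
  have := contDiff_sigmoid.continuous_deriv (by simp)
  fun_prop

theorem strictMonoOn_deriv_sigmoid_mul_sub (hρ : 0 < ρ) :
    StrictMonoOn (fun u => ρ * deriv sigmoid (ρ * (u - u₀))) (Iic u₀) := by
  intro x hx y hy hxy
  have hmaps : ∀ u ∈ Iic u₀, ρ * (u - u₀) ∈ Iic 0 := fun u hu =>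
    mul_nonpos_of_nonneg_of_nonpos hρ.le (sub_nonpos.2 hu)
  exact mul_lt_mul_of_pos_left
    (strictMonoOn_deriv_sigmoid (hmaps x hx) (hmaps y hy) (by gcongr)) hρ

theorem strictAntiOn_deriv_sigmoid_mul_sub (hρ : 0 < ρ) :
    StrictAntiOn (fun u => ρ * deriv sigmoid (ρ * (u - u₀))) (Ici u₀) := by
  intro x hx y hy hxy
  have hmaps : ∀ u ∈ Ici u₀, ρ * (u - u₀) ∈ Ici 0 := fun u hu =>
    mul_nonneg hρ.le (sub_nonneg.2 hu)
  exact mul_lt_mul_of_pos_left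
    (strictAntiOn_deriv_sigmoid (hmaps x hx) (hmaps y hy) (by gcongr)) hρ

theorem tendsto_tangentDefect_sigmoid_mul_sub (hρ : 0 < ρ) (b : ℝ) :
    Tendsto (tangentDefect (fun u => sigmoid (ρ * (u - u₀)))
      (fun u => ρ * deriv sigmoid (ρ * (u - u₀))) b) atTop (𝓝 (sigmoid (ρ * (b - u₀)) - 1)) := by
  have hlin : Tendsto (fun w => ρ * (w - u₀)) atTop atTop :=
    (tendsto_atTop_add_const_right _ _ tendsto_id).const_mul_atTop hρ
  have hslope := (tendsto_add_mul_deriv_sigmoid_atTop (ρ * (u₀ - b))).comp hlin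
  have hvalue := tendsto_sigmoid_atTop.comp hlin
  convert hslope.sub (hvalue.sub_const (sigmoid (ρ * (b - u₀)))) using 2
  · simp only [tangentDefect, Function.comp_apply]
    ring
  · ring

end ShiftedSigmoid

theorem sigmoid_tangent_point (ρ u₀ uL : ℝ) (hρ : 0 < ρ) (hL : uL < u₀) :
    ∃! w : ℝ, w ∈ Set.Ioi u₀ ∧
      deriv (fun u : ℝ => (1 + Real.exp (-ρ * (u - u₀)))⁻¹) w * (w - uL) =
        (1 + Real.exp (-ρ * (w - u₀)))⁻¹ - (1 + Real.exp (-ρ * (uL - u₀)))⁻¹ := by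
  have hsigmoid : ∀ x, (1 + exp (-ρ * x))⁻¹ = sigmoid (ρ * x) := fun x => by
    rw [sigmoid_def, neg_mul]
  simp only [hsigmoid]
  set ψ : ℝ → ℝ := fun u => sigmoid (ρ * (u - u₀))
  set ψ' : ℝ → ℝ := fun u => ρ * deriv sigmoid (ρ * (u - u₀))
  have hψ : ∀ u, HasDerivAt ψ (ψ' u) u := hasDerivAt_sigmoid_mul_sub u₀
  have htangent : ∀ w, deriv ψ w * (w - uL) = sigmoid (ρ * (w - u₀)) - sigmoid (ρ * (uL - u₀)) ↔
      tangentDefect ψ ψ' uL w = 0 :=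
    fun w => by rw [(hψ w).deriv, tangentDefect, sub_eq_zero]
  simp_rw [htangent]
  refine existsUnique_zero_of_strictAntiOn
    (continuousOn_tangentDefect (fun u _ => hψ u)
      (continuous_deriv_sigmoid_mul_sub u₀).continuousOn)
    (strictAntiOn_tangentDefect (fun u _ => hψ u) (strictAntiOn_deriv_sigmoid_mul_sub u₀ hρ) hL)
    (tangentDefect_pos (fun u _ => hψ u)
      ((strictMonoOn_deriv_sigmoid_mul_sub u₀ hρ).mono fun _ hu => hu.2) hL) ?_
  have hlimit_neg : sigmoid (ρ * (uL - u₀)) - 1 < 0 := sub_neg.2 (sigmoid_lt_one _)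
  exact (tendsto_tangentDefect_sigmoid_mul_sub u₀ hρ uL).eventually (gt_mem_nhds hlimit_neg)
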